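/- arXiv:1703.06567 — 4 statements merged into one kernel-verified Lean document; each statement's English description precedes it below -/
import Mathlib

section
/- Let A ∈ ℝ^{n×n}, B ∈ ℝ^{n×m}, h > 0, and let u : ℕ → ℝ^m. Let x : [0,∞) → ℝ^n be continuous and, for every k ∈ ℕ and every t ∈ (kh, (k+1)h), differentiable at t with x'(t) = A x(t) + B u_k. Assume there exist M > 0 and γ ∈ (0,1) such that |x(kh)|_∞ ≤ M γ^k and |u_k|_∞ ≤ M γ^k for all k ∈ ℕ. Then there exists M' > 0 such that |x(t)|_∞ ≤ M' e^{−σ t} for all t ≥ 0, where σ := (1/(2h)) log(1/γ). -/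
open Real Set Filter Topology

lemma mulVec_supnorm_le {n m : ℕ} (A : Matrix (Fin n) (Fin m) ℝ) (v : Fin m → ℝ) :
    ‖A.mulVec v‖ ≤ (∑ i, ∑ j, |A i j|) * ‖v‖ := by
  have hC : (0:ℝ) ≤ (∑ i, ∑ j, |A i j|) * ‖v‖ := by positivity
  rw [pi_norm_le_iff_of_nonneg hC]
  intro i
  have h1 : ‖A.mulVec v i‖ = |∑ j, A i j * v j| := by
    simp [Matrix.mulVec, dotProduct, Real.norm_eq_abs]
  rw [h1]
  calc |∑ j, A i j * v j| ≤ ∑ j, |A i j * v j| := Finset.abs_sum_le_sum_abs _ _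
    _ = ∑ j, |A i j| * |v j| := by simp [abs_mul]
    _ ≤ ∑ j, |A i j| * ‖v‖ := by
        refine Finset.sum_le_sum fun j _ => ?_
        exact mul_le_mul_of_nonneg_left
          ((Real.norm_eq_abs (v j)) ▸ norm_le_pi_norm v j) (abs_nonneg _)
    _ = (∑ j, |A i j|) * ‖v‖ := by rw [Finset.sum_mul]
    _ ≤ (∑ i, ∑ j, |A i j|) * ‖v‖ := by
        refine mul_le_mul_of_nonneg_right ?_ (norm_nonneg _)
        exact Finset.single_le_sum (f := fun i => ∑ j, |A i j|)
          (fun i _ => by positivity) (Finset.mem_univ i)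

set_option maxHeartbeats 1000000 in
/-- Intersample behavior of a sampled-data linear system with a
zero-order-hold input: exponential decay of the sampled state and the
held input implies exponential decay of the continuous-time state.
The norm on `Fin n → ℝ` is the sup norm `|·|_∞`. -/
theorem sampled_data_intersample_exponential_decay
    {n m : ℕ}
    (A : Matrix (Fin n) (Fin n) ℝ) (B : Matrix (Fin n) (Fin m) ℝ)
    (h : ℝ) (hh : 0 < h)
    (u : ℕ → Fin m → ℝ) (x : ℝ → Fin n → ℝ)
    (hcont : ContinuousOn x (Set.Ici (0:ℝ)))
    (hderiv : ∀ k : ℕ, ∀ t ∈ Set.Ioo ((k : ℝ) * h) (((k : ℝ) + 1) * h),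
      HasDerivAt x (A.mulVec (x t) + B.mulVec (u k)) t)
    (M γ : ℝ) (hM : 0 < M) (hγ : γ ∈ Set.Ioo (0:ℝ) 1)
    (hx : ∀ k : ℕ, ‖x ((k : ℝ) * h)‖ ≤ M * γ ^ k)
    (hu : ∀ k : ℕ, ‖u k‖ ≤ M * γ ^ k) :
    ∃ M' : ℝ, 0 < M' ∧ ∀ t : ℝ, 0 ≤ t →
      ‖x t‖ ≤ M' * Real.exp (-(1 / (2 * h) * Real.log (1 / γ)) * t) := by
  obtain ⟨hγ0, hγ1⟩ := hγ
  set CA : ℝ := ∑ i, ∑ j, |A i j| with hCAdef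
  set CB : ℝ := ∑ i, ∑ j, |B i j| with hCBdef
  have hCA0 : 0 ≤ CA := by positivity
  have hCB0 : 0 ≤ CB := by positivity
  set K : ℝ := CA + 1 with hKdef
  have hK0 : 0 < K := by positivity
  set E : ℝ := Real.exp (K * h) with hEdef
  have hE1 : 1 ≤ E := Real.one_le_exp (by positivity)
  have hE0 : 0 < E := lt_of_lt_of_le one_pos hE1
  set D : ℝ := E * (1 + CB / K) with hDdef
  have hD1 : 1 ≤ D := by
    have : 1 ≤ 1 + CB / K := le_add_of_nonneg_right (by positivity)
    nlinarith
  have hD0 : 0 < D := lt_of_lt_of_le one_pos hD1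
  set L : ℝ := Real.log (1 / γ) with hLdef
  have hL0 : 0 < L := Real.log_pos (one_lt_one_div hγ0 hγ1)
  -- interval bound
  have key : ∀ k : ℕ, ∀ t ∈ Set.Icc ((k:ℝ)*h) (((k:ℝ)+1)*h),
      ‖x t‖ ≤ M * γ ^ k * D := by
    intro k t ⟨ht1, ht2⟩
    have hkh0 : (0:ℝ) ≤ (k:ℝ) * h := by positivity
    rcases eq_or_lt_of_le ht1 with heq | hlt
    · rw [← heq]
      calc ‖x ((k:ℝ)*h)‖ ≤ M * γ ^ k := hx k
        _ ≤ M * γ ^ k * D := le_mul_of_one_le_right (by positivity) hD1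
    · set ε : ℝ := CB * (M * γ ^ k) with hεdef
      have hε0 : 0 ≤ ε := by positivity
      have hstep : ∀ s ∈ Set.Ioo ((k:ℝ)*h) t,
          ‖x t‖ ≤ ‖x s‖ * E + ε / K * (E - 1) := by
        intro s ⟨hs1, hs2⟩
        have hs0 : (0:ℝ) ≤ s := le_trans hkh0 hs1.le
        have hgr := norm_le_gronwallBound_of_norm_deriv_right_le
          (f := x) (f' := fun τ => A.mulVec (x τ) + B.mulVec (u k))
          (δ := ‖x s‖) (K := K) (ε := ε) (a := s) (b := t)
          (hcont.mono (fun y hy => le_trans hs0 hy.1))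
          (fun τ hτ => ((hderiv k τ ⟨lt_of_lt_of_le hs1 hτ.1,
              lt_of_lt_of_le hτ.2 ht2⟩).hasDerivWithinAt))
          le_rfl
          (fun τ hτ => by
            calc ‖A.mulVec (x τ) + B.mulVec (u k)‖
                ≤ ‖A.mulVec (x τ)‖ + ‖B.mulVec (u k)‖ := norm_add_le _ _
              _ ≤ CA * ‖x τ‖ + CB * ‖u k‖ :=
                  add_le_add (mulVec_supnorm_le A _) (mulVec_supnorm_le B _)
              _ ≤ K * ‖x τ‖ + ε := by
                  refine add_le_add ?_ (mul_le_mul_of_nonneg_left (hu k) hCB0)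
                  exact mul_le_mul_of_nonneg_right (by simp [hKdef]) (norm_nonneg _))
          t ⟨hs2.le, le_rfl⟩
        have hKne : K ≠ 0 := ne_of_gt hK0
        rw [gronwallBound_of_K_ne_0 hKne] at hgr
        have hts : 0 ≤ t - s := by linarith
        have htsh : t - s ≤ h := by
          have : ((k:ℝ)+1)*h - (k:ℝ)*h = h := by ring
          linarith
        have hexp : Real.exp (K * (t - s)) ≤ E := by
          rw [hEdef]
          exact Real.exp_le_exp.mpr (mul_le_mul_of_nonneg_left htsh hK0.le)
        have hexp1 : (1:ℝ) ≤ Real.exp (K * (t - s)) := Real.one_le_exp (by positivity)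
        calc ‖x t‖ ≤ ‖x s‖ * Real.exp (K * (t - s))
              + ε / K * (Real.exp (K * (t - s)) - 1) := hgr
          _ ≤ ‖x s‖ * E + ε / K * (E - 1) := by
              refine add_le_add (mul_le_mul_of_nonneg_left hexp (norm_nonneg _)) ?_
              refine mul_le_mul_of_nonneg_left (by linarith) (by positivity)
      -- take limit s → (kh)⁺
      have hne : (𝓝[Set.Ioo ((k:ℝ)*h) t] ((k:ℝ)*h)).NeBot :=
        left_nhdsWithin_Ioo_neBot hlt
      have htend : Tendsto (fun s => ‖x s‖ * E + ε / K * (E - 1))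
          (𝓝[Set.Ioo ((k:ℝ)*h) t] ((k:ℝ)*h))
          (𝓝 (‖x ((k:ℝ)*h)‖ * E + ε / K * (E - 1))) := by
        have h1 : Tendsto x (𝓝[Set.Ioo ((k:ℝ)*h) t] ((k:ℝ)*h)) (𝓝 (x ((k:ℝ)*h))) :=
          ((hcont.continuousWithinAt (Set.mem_Ici.mpr hkh0)).mono
            (fun y hy => le_trans hkh0 hy.1.le)).tendsto
        exact ((h1.norm.mul_const E).add_const _)
      have hle : ‖x t‖ ≤ ‖x ((k:ℝ)*h)‖ * E + ε / K * (E - 1) := by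
        refine ge_of_tendsto htend ?_
        filter_upwards [self_mem_nhdsWithin] with s hs using hstep s hs
      have hxk := hx k
      calc ‖x t‖ ≤ ‖x ((k:ℝ)*h)‖ * E + ε / K * (E - 1) := hle
        _ ≤ M * γ ^ k * E + CB * (M * γ ^ k) / K * (E - 1) := by
            refine add_le_add (mul_le_mul_of_nonneg_right hxk hE0.le) le_rfl
        _ ≤ M * γ ^ k * D := by
            rw [hDdef]
            have hMk : 0 ≤ M * γ ^ k := by positivity
            have h1 : CB * (M * γ ^ k) / K * (E - 1) ≤ M * γ ^ k * (E * (CB / K)) := by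
              have : CB * (M * γ ^ k) / K * (E - 1) = M * γ ^ k * (CB / K * (E - 1)) := by
                ring
              rw [this]
              refine mul_le_mul_of_nonneg_left ?_ hMk
              have hq : 0 ≤ CB / K := by positivity
              nlinarith
            nlinarith
  -- conclude
  refine ⟨M * D * Real.exp (L / 2), by positivity, fun t ht => ?_⟩
  set k : ℕ := ⌊t / h⌋₊ with hkdef
  have hk1 : (k:ℝ) * h ≤ t := by
    have h1 : (k:ℝ) ≤ t / h := Nat.floor_le (div_nonneg ht hh.le)
    calc (k:ℝ) * h ≤ t / h * h := mul_le_mul_of_nonneg_right h1 hh.le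
      _ = t := by field_simp
  have hk2 : t ≤ ((k:ℝ) + 1) * h := by
    have := (Nat.lt_floor_add_one (t / h)).le
    calc t = t / h * h := by field_simp
      _ ≤ ((k:ℝ) + 1) * h := mul_le_mul_of_nonneg_right this hh.le
  have hxt : ‖x t‖ ≤ M * γ ^ k * D := key k t ⟨hk1, hk2⟩
  have hγk : γ ^ k ≤ Real.exp (L / 2) * Real.exp (-(1 / (2 * h) * L) * t) := by
    have hγexp : γ ^ k = Real.exp (-(k:ℝ) * L) := by
      have hlg : Real.log γ = -L := by
        rw [hLdef, Real.log_div one_ne_zero (ne_of_gt hγ0), Real.log_one]; ring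
      rw [← Real.exp_log hγ0, ← Real.exp_nat_mul, hlg]
      ring_nf
    rw [hγexp, ← Real.exp_add, Real.exp_le_exp]
    have hσt : 1 / (2 * h) * L * t ≤ 1 / (2 * h) * L * (((k:ℝ) + 1) * h) :=
      mul_le_mul_of_nonneg_left hk2 (by positivity)
    have heq : 1 / (2 * h) * L * (((k:ℝ) + 1) * h) = ((k:ℝ) + 1) * L / 2 := by
      field_simp
    rw [heq] at hσt
    have hkL : 0 ≤ (k:ℝ) * L := by positivity
    nlinarith
  calc ‖x t‖ ≤ M * γ ^ k * D := hxt
    _ ≤ M * (Real.exp (L / 2) * Real.exp (-(1 / (2 * h) * L) * t)) * D := by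
        refine mul_le_mul_of_nonneg_right (mul_le_mul_of_nonneg_left hγk hM.le) hD0.le
    _ = M * D * Real.exp (L / 2) * Real.exp (-(1 / (2 * h) * L) * t) := by ring
end

section
/- Let A_d ∈ ℝ^{n×n}, B_d ∈ ℝ^{n×m}, C ∈ ℝ^{p×n}, K ∈ ℝ^{m×n}, L ∈ ℝ^{n×p}, and set R := A_d − LC and R̄ := A_d − B_dK. Assume R^η = 0 for a positive integer η, and that there exist M_R > 0 and γ_R ∈ (0,1) with ‖R̄^ℓ‖ ≤ M_R γ_R^ℓ for all ℓ ∈ ℕ. Let N ≥ 2 be an integer, set α_ℓ := ‖C R^ℓ L‖ / N for ℓ = 0, …, η−1, and let F be the η×η matrix whose first row is (α_0, α_1, …, α_{η−1}), whose (i+1, i) entries are 1 for i = 1, …, η−1, and whose other entries are 0. Assume every complex eigenvalue of F has modulus strictly less than 1. Let E_st > 0 and define E : ℕ → ℝ by E_0 := ‖C‖ E_st, E_{k+1} := ‖C R^{k+1}‖ E_st + Σ_{ℓ=0}^{k} (‖C R^ℓ L‖/N) E_{k−ℓ} for 0 ≤ k ≤ η−2, and E_{k+1} := Σ_{ℓ=0}^{η−1}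 (‖C R^ℓ L‖/N) E_{k−ℓ} for k ≥ η−1. Let x, x̂ : ℕ → ℝ^n and q : ℕ → ℝ^p satisfy x̂_0 = 0, |x_0|_∞ ≤ E_st, x_{k+1} = A_d x_k − B_d K x̂_k, and x̂_{k+1} = A_d x̂_k − B_d K x̂_k + L(q_k − C x̂_k). Assume that for every k, if |C x_k − C x̂_k|_∞ ≤ E_k then |C x_k − q_k|_∞ ≤ E_k/N. Then |C x_k − C x̂_k|_∞ ≤ E_k for all k, and there exist M_* > 0 and γ ∈ (0,1) such that |x_k|_∞ ≤ M_* γ^k and |x̂_k|_∞ ≤ M_* γ^k for all k ∈ ℕ. -/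
/-!
The estimation error `e = x - xhat` satisfies `e (k+1) = R e k + L (C x k - q k)`, so by variation
of constants `C e k` is `C R^k e 0` plus the convolution of `C R^ℓ L` with the past quantization
errors. Because `R^η = 0`, the bound obtained this way is exactly the recursion defining `E`, and
induction on `k` shows that the quantizer never saturates.

The companion matrix `F` has nonnegative first row `α`. If `∑ α_ℓ ≥ 1`, the intermediate value
theorem gives a real root `r ≥ 1` of `r^η = ∑ α_ℓ r^(η-1-ℓ)`, with eigenvector `(r^(η-1-j))_j`;
the Schur condition rules this out, so `∑ α_ℓ < 1` and `E` decays geometrically. Then `e` and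
`xhat` are states of the exponentially stable systems `(R, L)` and `(Rbar, L)` driven by
geometrically decaying inputs, so both decay geometrically, and so does `x = e + xhat`.
-/

/-- The operator norm of a matrix induced by the `ℓ∞` (max) norms on
vectors, i.e. `‖M‖ = sup {|Mv|_∞ : |v|_∞ = 1}`. -/
noncomputable def opNorm {m n : ℕ} (M : Matrix (Fin m) (Fin n) ℝ) : ℝ :=
  ‖LinearMap.toContinuousLinearMap (Matrix.mulVecLin M)‖

open Matrix Finset Filter Topology

lemma opNorm_nonneg {m n : ℕ} (M : Matrix (Fin m) (Fin n) ℝ) : 0 ≤ opNorm M :=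
  norm_nonneg _

lemma norm_mulVec_le_opNorm {m n : ℕ} (M : Matrix (Fin m) (Fin n) ℝ) (v : Fin n → ℝ) :
    ‖M *ᵥ v‖ ≤ opNorm M * ‖v‖ :=
  (LinearMap.toContinuousLinearMap (Matrix.mulVecLin M)).le_opNorm v

lemma opNorm_zero {m n : ℕ} : opNorm (0 : Matrix (Fin m) (Fin n) ℝ) = 0 := by
  simp [opNorm]

lemma opNorm_mul_le {m n p : ℕ} (M : Matrix (Fin m) (Fin n) ℝ) (M' : Matrix (Fin n) (Fin p) ℝ) :
    opNorm (M * M') ≤ opNorm M * opNorm M' :=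
  ContinuousLinearMap.opNorm_le_bound _ (mul_nonneg (opNorm_nonneg M) (opNorm_nonneg M'))
    fun v => by
      simpa [← mulVec_mulVec, mul_assoc] using
        (norm_mulVec_le_opNorm M _).trans
          (mul_le_mul_of_nonneg_left (norm_mulVec_le_opNorm M' v) (opNorm_nonneg M))

theorem Matrix.eq_pow_mulVec_add_sum_of_recurrence {R ι κ : Type*} [CommRing R] [Fintype ι]
    [DecidableEq ι] [Fintype κ] (A : Matrix ι ι R) (B : Matrix ι κ R) {z : ℕ → ι → R}
    {u : ℕ → κ → R} (hz : ∀ k, z (k + 1) = A *ᵥ z k + B *ᵥ u k) (k : ℕ) :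
    z k = A ^ k *ᵥ z 0 + ∑ ℓ ∈ range k, (A ^ ℓ * B) *ᵥ u (k - 1 - ℓ) := by
  induction k with
  | zero => simp
  | succ k ih =>
    rw [hz, ih, sum_range_succ', mulVec_add, mulVec_mulVec, ← pow_succ', mulVec_sum]
    simp only [pow_succ', ← mulVec_mulVec, pow_zero, one_mulVec, Nat.add_sub_cancel,
      Nat.sub_zero, Nat.sub_sub, add_comm 1]
    abel

theorem norm_mulVec_le_of_recurrence {n m p : ℕ} (A : Matrix (Fin n) (Fin n) ℝ)
    (B : Matrix (Fin n) (Fin m) ℝ) (C : Matrix (Fin p) (Fin n) ℝ) {z : ℕ → Fin n → ℝ}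
    {u : ℕ → Fin m → ℝ} (hz : ∀ k, z (k + 1) = A *ᵥ z k + B *ᵥ u k) (k : ℕ) :
    ‖C *ᵥ z k‖ ≤
      opNorm (C * A ^ k) * ‖z 0‖ + ∑ ℓ ∈ range k, opNorm (C * A ^ ℓ * B) * ‖u (k - 1 - ℓ)‖ := by
  rw [eq_pow_mulVec_add_sum_of_recurrence A B hz, mulVec_add, mulVec_sum, mulVec_mulVec]
  refine (norm_add_le _ _).trans (add_le_add (norm_mulVec_le_opNorm _ _) ?_)
  refine (norm_sum_le _ _).trans (sum_le_sum fun ℓ _ => ?_)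
  rw [mulVec_mulVec, ← Matrix.mul_assoc]
  exact norm_mulVec_le_opNorm _ _

lemma sum_pow_mul_pow_le_div {β γ : ℝ} (hβ : 0 ≤ β) (hβγ : β < γ) (k : ℕ) :
    ∑ ℓ ∈ range k, β ^ ℓ * γ ^ (k - 1 - ℓ) ≤ γ ^ k / (γ - β) := by
  rw [le_div_iff₀ (sub_pos.2 hβγ)]
  have h := geom_sum₂_mul β γ k
  nlinarith [pow_nonneg hβ k]

theorem norm_le_mul_pow_of_recurrence {n m : ℕ} (A : Matrix (Fin n) (Fin n) ℝ)
    (B : Matrix (Fin n) (Fin m) ℝ) {z : ℕ → Fin n → ℝ} {u : ℕ → Fin m → ℝ}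
    (hz : ∀ k, z (k + 1) = A *ᵥ z k + B *ᵥ u k) {M β γ c : ℝ} (hβ : 0 ≤ β) (hβγ : β < γ)
    (hA : ∀ ℓ, opNorm (A ^ ℓ) ≤ M * β ^ ℓ) (hu : ∀ k, ‖u k‖ ≤ c * γ ^ k) (k : ℕ) :
    ‖z k‖ ≤ M * (‖z 0‖ + opNorm B * c / (γ - β)) * γ ^ k := by
  have hM : 0 ≤ M := by simpa using (opNorm_nonneg _).trans (hA 0)
  have hc : 0 ≤ c := by simpa using (norm_nonneg _).trans (hu 0)
  have hterm : ∀ ℓ ∈ range k, opNorm (A ^ ℓ * B) * ‖u (k - 1 - ℓ)‖ ≤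
      M * opNorm B * c * (β ^ ℓ * γ ^ (k - 1 - ℓ)) := fun ℓ _ =>
    calc opNorm (A ^ ℓ * B) * ‖u (k - 1 - ℓ)‖
        ≤ (M * β ^ ℓ * opNorm B) * (c * γ ^ (k - 1 - ℓ)) := by
          refine mul_le_mul ((opNorm_mul_le _ _).trans ?_) (hu _) (norm_nonneg _)
            (mul_nonneg (mul_nonneg hM (pow_nonneg hβ ℓ)) (opNorm_nonneg B))
          exact mul_le_mul_of_nonneg_right (hA ℓ) (opNorm_nonneg B)
      _ = M * opNorm B * c * (β ^ ℓ * γ ^ (k - 1 - ℓ)) := by ring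
  calc ‖z k‖
      ≤ opNorm (A ^ k) * ‖z 0‖ + ∑ ℓ ∈ range k, opNorm (A ^ ℓ * B) * ‖u (k - 1 - ℓ)‖ := by
        have h := norm_mulVec_le_of_recurrence A B (1 : Matrix (Fin n) (Fin n) ℝ) hz k
        simp only [one_mulVec, one_mul] at h
        exact h
    _ ≤ M * γ ^ k * ‖z 0‖ + M * opNorm B * c * (γ ^ k / (γ - β)) := by
        gcongr
        · exact (hA k).trans (by gcongr)
        · refine (sum_le_sum hterm).trans ?_
          rw [← mul_sum]
          exact mul_le_mul_of_nonneg_left (sum_pow_mul_pow_le_div hβ hβγ k)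
            (mul_nonneg (mul_nonneg hM (opNorm_nonneg B)) hc)
    _ = M * (‖z 0‖ + opNorm B * c / (γ - β)) * γ ^ k := by ring

lemma le_sum_abs_div_pow_mul_pow {η : ℕ} (f : ℕ → ℝ) {β : ℝ} (hβ : 0 < β) {i : ℕ} (hi : i < η) :
    f i ≤ (∑ j ∈ range η, |f j| / β ^ j) * β ^ i :=
  calc f i ≤ |f i| / β ^ i * β ^ i := by
        rw [div_mul_cancel₀ _ (pow_pos hβ i).ne']; exact le_abs_self _
    _ ≤ (∑ j ∈ range η, |f j| / β ^ j) * β ^ i :=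
        mul_le_mul_of_nonneg_right (single_le_sum (f := fun j => |f j| / β ^ j)
          (fun j _ => by positivity) (mem_range.2 hi)) (pow_nonneg hβ.le i)

lemma exists_le_mul_pow_of_eq_zero {η : ℕ} {f : ℕ → ℝ} (hf : ∀ ℓ, η ≤ ℓ → f ℓ = 0) {β : ℝ}
    (hβ : 0 < β) : ∃ M, ∀ ℓ, f ℓ ≤ M * β ^ ℓ := by
  refine ⟨∑ j ∈ range η, |f j| / β ^ j, fun ℓ => ?_⟩
  rcases lt_or_ge ℓ η with hℓ | hℓ
  · exact le_sum_abs_div_pow_mul_pow f hβ hℓ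
  · rw [hf ℓ hℓ]
    exact mul_nonneg (sum_nonneg fun j _ => by positivity) (pow_nonneg hβ.le ℓ)

lemma exists_pos_le_mul_pow_of_norm_sub_le {V : Type*} [SeminormedAddCommGroup V] {x y : ℕ → V}
    {γ P Q : ℝ} (hγ : 0 ≤ γ) (hxy : ∀ k, ‖x k - y k‖ ≤ P * γ ^ k) (hy : ∀ k, ‖y k‖ ≤ Q * γ ^ k) :
    ∃ M, 0 < M ∧ ∀ k, ‖x k‖ ≤ M * γ ^ k ∧ ‖y k‖ ≤ M * γ ^ k := by
  refine ⟨|P| + |Q| + 1, by positivity, fun k => ⟨?_, ?_⟩⟩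
  · nlinarith [norm_le_norm_sub_add (x k) (y k), hxy k, hy k, le_abs_self P, le_abs_self Q,
      pow_nonneg hγ k]
  · nlinarith [hy k, le_abs_self Q, abs_nonneg P, pow_nonneg hγ k]

def Matrix.companion {K : Type*} [Zero K] [One K] {η : ℕ} (a : ℕ → K) :
    Matrix (Fin η) (Fin η) K :=
  Matrix.of fun i j => if (i : ℕ) = 0 then a j else if (i : ℕ) = j + 1 then 1 else 0

lemma Matrix.companion_map {K K' : Type*} [Zero K] [One K] [Zero K'] [One K'] {η : ℕ}
    {f : K → K'} (hf0 : f 0 = 0) (hf1 : f 1 = 1) (a : ℕ → K) :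
    (companion a : Matrix (Fin η) (Fin η) K).map f = companion fun ℓ => f (a ℓ) := by
  ext i j
  simp only [map_apply, companion, of_apply]
  split_ifs <;> simp [hf0, hf1]

lemma Matrix.companion_mulVec_pow {K : Type*} [CommRing K] {η : ℕ} {a : ℕ → K} {r : K}
    (hr : r ^ η = ∑ ℓ ∈ range η, a ℓ * r ^ (η - 1 - ℓ)) :
    (companion a : Matrix (Fin η) (Fin η) K) *ᵥ (fun j : Fin η => r ^ (η - 1 - (j : ℕ))) =
      r • fun j : Fin η => r ^ (η - 1 - (j : ℕ)) := by
  funext i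
  simp only [mulVec, dotProduct, companion, of_apply, Pi.smul_apply, smul_eq_mul]
  by_cases hi : (i : ℕ) = 0
  · simp only [hi, if_true, Nat.sub_zero]
    rw [Fin.sum_univ_eq_sum_range (fun ℓ => a ℓ * r ^ (η - 1 - ℓ)), ← hr, ← pow_succ']
    congr 1
    omega
  · have hj : (i : ℕ) - 1 < η := by omega
    rw [sum_eq_single ⟨(i : ℕ) - 1, hj⟩ (fun j _ hj' => by
      rw [if_neg hi, if_neg (fun h => hj' (Fin.ext (by simp; omega))), zero_mul])
      (fun h => absurd (mem_univ _) h)]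
    simp only [hi, if_false, if_pos (show (i : ℕ) = (i : ℕ) - 1 + 1 by omega), one_mul]
    rw [← pow_succ']
    congr 1
    omega

lemma Matrix.isRoot_charpoly_companion {K : Type*} [CommRing K] [IsDomain K] {η : ℕ}
    {a : ℕ → K} {r : K} (hr : r ^ η = ∑ ℓ ∈ range η, a ℓ * r ^ (η - 1 - ℓ)) :
    (companion a : Matrix (Fin η) (Fin η) K).charpoly.IsRoot r := by
  obtain ⟨η, rfl⟩ : ∃ η', η = η' + 1 := Nat.exists_eq_succ_of_ne_zero (by rintro rfl; simp at hr)
  have hv : (fun j : Fin (η + 1) => r ^ (η + 1 - 1 - j)) ≠ 0 := fun h => by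
    simpa using congrFun h (Fin.last η)
  rw [← charpoly_toLin', ← Module.End.hasEigenvalue_iff_isRoot_charpoly]
  exact Module.End.hasEigenvalue_of_hasEigenvector
    ⟨Module.End.mem_eigenspace_iff.2 (by simpa using companion_mulVec_pow hr), hv⟩

lemma exists_one_le_pow_eq_sum {η : ℕ} {a : ℕ → ℝ} (ha : ∀ ℓ, 0 ≤ a ℓ)
    (hs : 1 ≤ ∑ ℓ ∈ range η, a ℓ) :
    ∃ r, 1 ≤ r ∧ r ^ η = ∑ ℓ ∈ range η, a ℓ * r ^ (η - 1 - ℓ) := by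
  set s := ∑ ℓ ∈ range η, a ℓ
  have hη : η ≠ 0 := by rintro rfl; norm_num [s] at hs
  set f : ℝ → ℝ := fun r => r ^ η - ∑ ℓ ∈ range η, a ℓ * r ^ (η - 1 - ℓ)
  have hf1 : f 1 ≤ 0 := by
    simp only [f, one_pow, mul_one]
    exact sub_nonpos.2 hs
  have hfs : 0 ≤ f (1 + s) := by
    have hle : ∑ ℓ ∈ range η, a ℓ * (1 + s) ^ (η - 1 - ℓ) ≤ s * (1 + s) ^ (η - 1) := by
      rw [sum_mul]
      exact sum_le_sum fun ℓ _ =>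
        mul_le_mul_of_nonneg_left (pow_le_pow_right₀ (by linarith) (by omega)) (ha ℓ)
    have hpow : (1 + s) ^ η = (1 + s) * (1 + s) ^ (η - 1) := by
      rw [← pow_succ']; congr 1; omega
    have hpos : 0 ≤ (1 + s) ^ (η - 1) := pow_nonneg (by linarith) _
    simp only [f]
    nlinarith
  obtain ⟨r, hr, hfr⟩ := intermediate_value_Icc (by linarith : (1 : ℝ) ≤ 1 + s)
    (by fun_prop : Continuous f).continuousOn ⟨hf1, hfs⟩
  exact ⟨r, hr.1, sub_eq_zero.1 hfr⟩

theorem sum_lt_one_of_norm_lt_one_of_isRoot_charpoly_companion {η : ℕ} {a : ℕ → ℝ}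
    (ha : ∀ ℓ, 0 ≤ a ℓ)
    (hroots : ∀ z : ℂ,
      (companion (fun ℓ => (a ℓ : ℂ)) : Matrix (Fin η) (Fin η) ℂ).charpoly.IsRoot z → ‖z‖ < 1) :
    ∑ ℓ ∈ range η, a ℓ < 1 := by
  by_contra! hs
  obtain ⟨r, hr1, hr⟩ := exists_one_le_pow_eq_sum ha hs
  have hz := hroots r (isRoot_charpoly_companion (by exact_mod_cast hr))
  rw [Complex.norm_of_nonneg (by linarith)] at hz
  linarith

lemma exists_le_pow_of_lt_one {s : ℝ} (hs : s < 1) (η : ℕ) :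
    ∃ θ ∈ Set.Ioo (0 : ℝ) 1, s ≤ θ ^ η := by
  have hpow : Tendsto (fun θ : ℝ => θ ^ η) (𝓝[<] 1) (𝓝 1) := by
    simpa using ((continuous_pow (M := ℝ) η).tendsto 1).mono_left nhdsWithin_le_nhds
  obtain ⟨θ, hθs, hθ⟩ :=
    ((hpow.eventually (lt_mem_nhds hs)).and (Ioo_mem_nhdsLT zero_lt_one)).exists
  exact ⟨θ, hθ, hθs.le⟩

theorem le_mul_pow_of_le_sum {η : ℕ} {E a : ℕ → ℝ} {c θ : ℝ} (hη : 1 ≤ η) (ha : ∀ ℓ, 0 ≤ a ℓ)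
    (hc : 0 ≤ c) (hθ0 : 0 ≤ θ) (hθ1 : θ ≤ 1) (hs : ∑ ℓ ∈ range η, a ℓ ≤ θ ^ η)
    (hinit : ∀ i < η, E i ≤ c * θ ^ i)
    (hrec : ∀ k, η - 1 ≤ k → E (k + 1) ≤ ∑ ℓ ∈ range η, a ℓ * E (k - ℓ)) (k : ℕ) :
    E k ≤ c * θ ^ k := by
  induction k using Nat.strong_induction_on with
  | _ k ih =>
  rcases lt_or_ge k η with hk | hk
  · exact hinit k hk
  obtain ⟨k, rfl⟩ : ∃ j, k = j + 1 := ⟨k - 1, by omega⟩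
  calc E (k + 1) ≤ ∑ ℓ ∈ range η, a ℓ * (c * θ ^ (k + 1 - η)) :=
        (hrec k (by omega)).trans <| sum_le_sum fun ℓ hℓ => by
          have hℓ := mem_range.1 hℓ
          exact mul_le_mul_of_nonneg_left ((ih _ (by omega)).trans
            (mul_le_mul_of_nonneg_left (pow_le_pow_of_le_one hθ0 hθ1 (by omega)) hc)) (ha ℓ)
    _ ≤ θ ^ η * (c * θ ^ (k + 1 - η)) := by
        rw [← sum_mul]
        exact mul_le_mul_of_nonneg_right hs (mul_nonneg hc (pow_nonneg hθ0 _))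
    _ = c * θ ^ (k + 1) := by
        rw [mul_left_comm, ← pow_add, Nat.add_sub_cancel' hk]

theorem exists_le_mul_pow_of_le_sum {η : ℕ} {E a : ℕ → ℝ} (hη : 1 ≤ η) (ha : ∀ ℓ, 0 ≤ a ℓ)
    (hs : ∑ ℓ ∈ range η, a ℓ < 1)
    (hrec : ∀ k, η - 1 ≤ k → E (k + 1) ≤ ∑ ℓ ∈ range η, a ℓ * E (k - ℓ)) :
    ∃ c, 0 ≤ c ∧ ∃ θ ∈ Set.Ioo (0 : ℝ) 1, ∀ k, E k ≤ c * θ ^ k := by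
  obtain ⟨θ, hθ, hθs⟩ := exists_le_pow_of_lt_one hs η
  set c := ∑ i ∈ range η, |E i| / θ ^ i
  have hc : 0 ≤ c := sum_nonneg fun i _ => by have := hθ.1; positivity
  exact ⟨c, hc, θ, hθ, le_mul_pow_of_le_sum hη ha hc hθ.1.le hθ.2.le hθs
    (fun i hi => le_sum_abs_div_pow_mul_pow E hθ.1 hi) hrec⟩

theorem eq_add_sum_of_pow_eq_zero {n m p η : ℕ} {C : Matrix (Fin p) (Fin n) ℝ}
    {R : Matrix (Fin n) (Fin n) ℝ} {L : Matrix (Fin n) (Fin m) ℝ} {N Est : ℝ} {E : ℕ → ℝ}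
    (hdeadbeat : R ^ η = 0) (hE0 : E 0 = opNorm C * Est)
    (hElow : ∀ k : ℕ, k + 2 ≤ η →
      E (k + 1) = opNorm (C * R ^ (k + 1)) * Est
        + ∑ ℓ ∈ range (k + 1), (opNorm (C * R ^ ℓ * L) / N) * E (k - ℓ))
    (hEhigh : ∀ k : ℕ, η - 1 ≤ k →
      E (k + 1) = ∑ ℓ ∈ range η, (opNorm (C * R ^ ℓ * L) / N) * E (k - ℓ))
    (k : ℕ) :
    E k = opNorm (C * R ^ k) * Est + ∑ ℓ ∈ range k, opNorm (C * R ^ ℓ * L) / N * E (k - 1 - ℓ) := by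
  rcases k with _ | k
  · simp [hE0]
  simp only [Nat.add_sub_cancel]
  rcases le_or_gt (k + 2) η with hk | hk
  · exact hElow k hk
  rw [hEhigh k (by omega), pow_eq_zero_of_le (by omega) hdeadbeat, Matrix.mul_zero, opNorm_zero,
    zero_mul, zero_add]
  refine sum_subset (range_subset_range.2 (by omega)) fun ℓ _ hℓ => ?_
  rw [pow_eq_zero_of_le (by simpa using hℓ) hdeadbeat]
  simp [opNorm_zero]

theorem norm_mulVec_le_of_quantized {n m p : ℕ} {R : Matrix (Fin n) (Fin n) ℝ}
    {L : Matrix (Fin n) (Fin m) ℝ} {C : Matrix (Fin p) (Fin n) ℝ} {e : ℕ → Fin n → ℝ}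
    {d : ℕ → Fin m → ℝ} {E : ℕ → ℝ} {Est N : ℝ} (he : ∀ k, e (k + 1) = R *ᵥ e k + L *ᵥ d k)
    (he0 : ‖e 0‖ ≤ Est)
    (hE : ∀ k, E k =
      opNorm (C * R ^ k) * Est + ∑ ℓ ∈ range k, opNorm (C * R ^ ℓ * L) / N * E (k - 1 - ℓ))
    (hd : ∀ k, ‖C *ᵥ e k‖ ≤ E k → ‖d k‖ ≤ E k / N) (k : ℕ) :
    ‖C *ᵥ e k‖ ≤ E k := by
  induction k using Nat.strong_induction_on with
  | _ k ih =>
  calc ‖C *ᵥ e k‖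
      ≤ opNorm (C * R ^ k) * ‖e 0‖ + ∑ ℓ ∈ range k, opNorm (C * R ^ ℓ * L) * ‖d (k - 1 - ℓ)‖ :=
        norm_mulVec_le_of_recurrence R L C he k
    _ ≤ opNorm (C * R ^ k) * Est + ∑ ℓ ∈ range k, opNorm (C * R ^ ℓ * L) * (E (k - 1 - ℓ) / N) :=
        add_le_add (mul_le_mul_of_nonneg_left he0 (opNorm_nonneg _)) <| sum_le_sum fun ℓ hℓ =>
          mul_le_mul_of_nonneg_left (hd _ (ih _ (by simp at hℓ; omega))) (opNorm_nonneg _)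
    _ = E k := by
        rw [hE k]
        congr 1
        exact sum_congr rfl fun _ _ => by ring

section Observer

variable {n m p : ℕ} {Ad : Matrix (Fin n) (Fin n) ℝ} {Bd : Matrix (Fin n) (Fin m) ℝ}
  {C : Matrix (Fin p) (Fin n) ℝ} {K : Matrix (Fin m) (Fin n) ℝ} {L : Matrix (Fin n) (Fin p) ℝ}
  {x xhat : ℕ → Fin n → ℝ} {q : ℕ → Fin p → ℝ}

lemma observer_succ
    (hxhat : ∀ k, xhat (k + 1) =
      Ad *ᵥ xhat k - Bd *ᵥ K *ᵥ xhat k + L *ᵥ (q k - C *ᵥ xhat k)) (k : ℕ) :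
    xhat (k + 1) = (Ad - Bd * K) *ᵥ xhat k + L *ᵥ (q k - C *ᵥ xhat k) := by
  rw [hxhat, sub_mulVec, ← mulVec_mulVec]

lemma observer_error_succ (hx : ∀ k, x (k + 1) = Ad *ᵥ x k - Bd *ᵥ K *ᵥ xhat k)
    (hxhat : ∀ k, xhat (k + 1) =
      Ad *ᵥ xhat k - Bd *ᵥ K *ᵥ xhat k + L *ᵥ (q k - C *ᵥ xhat k)) (k : ℕ) :
    (x - xhat) (k + 1) = (Ad - L * C) *ᵥ (x - xhat) k + L *ᵥ (C *ᵥ x k - q k) := by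
  rw [Pi.sub_apply, Pi.sub_apply, hx, hxhat]
  simp only [sub_mulVec, mulVec_sub, ← mulVec_mulVec]
  abel

end Observer

theorem quantized_output_feedback_deadbeat_observer_general
    {n m p : ℕ}
    (Ad : Matrix (Fin n) (Fin n) ℝ) (Bd : Matrix (Fin n) (Fin m) ℝ)
    (C : Matrix (Fin p) (Fin n) ℝ) (K : Matrix (Fin m) (Fin n) ℝ)
    (L : Matrix (Fin n) (Fin p) ℝ)
    (R Rbar : Matrix (Fin n) (Fin n) ℝ)
    (hR : R = Ad - L * C) (hRbar : Rbar = Ad - Bd * K)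
    (η : ℕ) (hη : 1 ≤ η) (hdeadbeat : R ^ η = 0)
    (MR γR : ℝ) (hγR : γR ∈ Set.Ioo (0:ℝ) 1)
    (hRbar_pow : ∀ ℓ : ℕ, opNorm (Rbar ^ ℓ) ≤ MR * γR ^ ℓ)
    (N : ℕ) (hN : 2 ≤ N)
    (F : Matrix (Fin η) (Fin η) ℝ)
    (hF : ∀ i j : Fin η, F i j =
      if (i : ℕ) = 0 then opNorm (C * R ^ (j : ℕ) * L) / N
      else if (i : ℕ) = (j : ℕ) + 1 then 1 else 0)
    (hSchur : ∀ z : ℂ, ((F.map (Complex.ofReal)).charpoly).IsRoot z →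
      ‖z‖ < 1)
    (Est : ℝ)
    (E : ℕ → ℝ)
    (hE0 : E 0 = opNorm C * Est)
    (hElow : ∀ k : ℕ, k + 2 ≤ η →
      E (k + 1) = opNorm (C * R ^ (k + 1)) * Est
        + ∑ ℓ ∈ Finset.range (k + 1), (opNorm (C * R ^ ℓ * L) / N) * E (k - ℓ))
    (hEhigh : ∀ k : ℕ, η - 1 ≤ k →
      E (k + 1) = ∑ ℓ ∈ Finset.range η, (opNorm (C * R ^ ℓ * L) / N) * E (k - ℓ))
    (x xhat : ℕ → Fin n → ℝ) (q : ℕ → Fin p → ℝ)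
    (hxhat0 : xhat 0 = 0) (hx0 : ‖x 0‖ ≤ Est)
    (hx : ∀ k : ℕ,
      x (k + 1) = Ad.mulVec (x k) - Bd.mulVec (K.mulVec (xhat k)))
    (hxhat : ∀ k : ℕ,
      xhat (k + 1) = Ad.mulVec (xhat k) - Bd.mulVec (K.mulVec (xhat k))
        + L.mulVec (q k - C.mulVec (xhat k)))
    (hquant : ∀ k : ℕ,
      ‖C.mulVec (x k) - C.mulVec (xhat k)‖ ≤ E k →
      ‖C.mulVec (x k) - q k‖ ≤ E k / N) :
    (∀ k : ℕ, ‖C.mulVec (x k) - C.mulVec (xhat k)‖ ≤ E k) ∧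
    ∃ Mstar : ℝ, 0 < Mstar ∧ ∃ γ ∈ Set.Ioo (0:ℝ) 1,
      ∀ k : ℕ, ‖x k‖ ≤ Mstar * γ ^ k ∧ ‖xhat k‖ ≤ Mstar * γ ^ k := by
  set α : ℕ → ℝ := fun ℓ => opNorm (C * R ^ ℓ * L) / N
  have hα : ∀ ℓ, 0 ≤ α ℓ := fun ℓ => div_nonneg (opNorm_nonneg _) (Nat.cast_nonneg N)
  have herr := hR ▸ observer_error_succ hx hxhat
  have hobs := hRbar ▸ observer_succ hxhat
  have hbound : ∀ k, ‖C *ᵥ x k - C *ᵥ xhat k‖ ≤ E k := by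
    simpa only [Pi.sub_apply, mulVec_sub] using norm_mulVec_le_of_quantized herr
      (by simpa [hxhat0] using hx0) (eq_add_sum_of_pow_eq_zero hdeadbeat hE0 hElow hEhigh)
      (fun k hk => hquant k (by simpa only [Pi.sub_apply, mulVec_sub] using hk))
  have hFα : F = companion α := by
    ext i j
    simp [hF, companion, α]
  rw [hFα, companion_map Complex.ofReal_zero Complex.ofReal_one] at hSchur
  obtain ⟨c, hc, θ, hθ, hEθ⟩ := exists_le_mul_pow_of_le_sum hη hα
    (sum_lt_one_of_norm_lt_one_of_isRoot_charpoly_companion hα hSchur)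
    (fun k hk => (hEhigh k hk).le)
  obtain ⟨γ, hmax, hγ1⟩ := exists_between (max_lt hθ.2 hγR.2)
  have hθγ : θ ≤ γ := (le_max_left _ _).trans hmax.le
  have hγ0 : 0 < γ := hθ.1.trans_le hθγ
  have hEγ : ∀ k, E k ≤ c * γ ^ k := fun k =>
    (hEθ k).trans (mul_le_mul_of_nonneg_left (pow_le_pow_left₀ hθ.1.le hθγ k) hc)
  have hquantγ : ∀ k, ‖C *ᵥ x k - q k‖ ≤ c * γ ^ k := fun k =>
    ((hquant k (hbound k)).trans (div_le_self ((norm_nonneg _).trans (hbound k))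
      (by exact_mod_cast (by omega : 1 ≤ N)))).trans (hEγ k)
  have hinnov : ∀ k, ‖q k - C *ᵥ xhat k‖ ≤ 2 * c * γ ^ k := fun k => by
    have h := norm_sub_le (C *ᵥ x k - C *ᵥ xhat k) (C *ᵥ x k - q k)
    rw [sub_sub_sub_cancel_left] at h
    linarith [hbound k, hEγ k, hquantγ k]
  -- a nilpotent `R` decays at every rate, in particular at `γ / 2 < γ`
  obtain ⟨Me, hRpow⟩ := exists_le_mul_pow_of_eq_zero (η := η) (f := fun ℓ => opNorm (R ^ ℓ))
    (fun ℓ hℓ => by simp [pow_eq_zero_of_le hℓ hdeadbeat, opNorm_zero]) (half_pos hγ0)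
  obtain ⟨M, hM, hdecay⟩ := exists_pos_le_mul_pow_of_norm_sub_le hγ0.le
    (norm_le_mul_pow_of_recurrence R L herr (half_pos hγ0).le (half_lt_self hγ0) hRpow hquantγ)
    (norm_le_mul_pow_of_recurrence Rbar L hobs hγR.1.le ((le_max_right _ _).trans_lt hmax)
      hRbar_pow hinnov)
  exact ⟨hbound, M, hM, γ, ⟨hγ0, hγ1⟩, hdecay⟩

/-- Theorem 2 (discrete-time content): quantized output feedback with a
deadbeat Luenberger observer, `(A_d − LC)^η = 0`. -/
theorem quantized_output_feedback_deadbeat_observer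
    {n m p : ℕ}
    (Ad : Matrix (Fin n) (Fin n) ℝ) (Bd : Matrix (Fin n) (Fin m) ℝ)
    (C : Matrix (Fin p) (Fin n) ℝ) (K : Matrix (Fin m) (Fin n) ℝ)
    (L : Matrix (Fin n) (Fin p) ℝ)
    (R Rbar : Matrix (Fin n) (Fin n) ℝ)
    (hR : R = Ad - L * C) (hRbar : Rbar = Ad - Bd * K)
    (η : ℕ) (hη : 1 ≤ η) (hdeadbeat : R ^ η = 0)
    (MR γR : ℝ) (hMR : 0 < MR) (hγR : γR ∈ Set.Ioo (0:ℝ) 1)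
    (hRbar_pow : ∀ ℓ : ℕ, opNorm (Rbar ^ ℓ) ≤ MR * γR ^ ℓ)
    (N : ℕ) (hN : 2 ≤ N)
    (F : Matrix (Fin η) (Fin η) ℝ)
    (hF : ∀ i j : Fin η, F i j =
      if (i : ℕ) = 0 then opNorm (C * R ^ (j : ℕ) * L) / N
      else if (i : ℕ) = (j : ℕ) + 1 then 1 else 0)
    (hSchur : ∀ z : ℂ, ((F.map (Complex.ofReal)).charpoly).IsRoot z →
      ‖z‖ < 1)
    (Est : ℝ) (hEst : 0 < Est)
    (E : ℕ → ℝ)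
    (hE0 : E 0 = opNorm C * Est)
    (hElow : ∀ k : ℕ, k + 2 ≤ η →
      E (k + 1) = opNorm (C * R ^ (k + 1)) * Est
        + ∑ ℓ ∈ Finset.range (k + 1), (opNorm (C * R ^ ℓ * L) / N) * E (k - ℓ))
    (hEhigh : ∀ k : ℕ, η - 1 ≤ k →
      E (k + 1) = ∑ ℓ ∈ Finset.range η, (opNorm (C * R ^ ℓ * L) / N) * E (k - ℓ))
    (x xhat : ℕ → Fin n → ℝ) (q : ℕ → Fin p → ℝ)
    (hxhat0 : xhat 0 = 0) (hx0 : ‖x 0‖ ≤ Est)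
    (hx : ∀ k : ℕ,
      x (k + 1) = Ad.mulVec (x k) - Bd.mulVec (K.mulVec (xhat k)))
    (hxhat : ∀ k : ℕ,
      xhat (k + 1) = Ad.mulVec (xhat k) - Bd.mulVec (K.mulVec (xhat k))
        + L.mulVec (q k - C.mulVec (xhat k)))
    (hquant : ∀ k : ℕ,
      ‖C.mulVec (x k) - C.mulVec (xhat k)‖ ≤ E k →
      ‖C.mulVec (x k) - q k‖ ≤ E k / N) :
    (∀ k : ℕ, ‖C.mulVec (x k) - C.mulVec (xhat k)‖ ≤ E k) ∧
    ∃ Mstar : ℝ, 0 < Mstar ∧ ∃ γ ∈ Set.Ioo (0:ℝ) 1,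
      ∀ k : ℕ, ‖x k‖ ≤ Mstar * γ ^ k ∧ ‖xhat k‖ ≤ Mstar * γ ^ k :=
  quantized_output_feedback_deadbeat_observer_general Ad Bd C K L R Rbar hR hRbar η hη hdeadbeat MR
    γR hγR hRbar_pow N hN F hF hSchur Est E hE0 hElow hEhigh x xhat q hxhat0 hx0 hx hxhat hquant
end

section
/- Let R ∈ ℝ^{n×n}, L ∈ ℝ^{n×p}, C ∈ ℝ^{p×n}, and let η ≥ 1 with R^η = 0. Let e : ℕ → ℝ^n and d : ℕ → ℝ^p satisfy e_{k+1} = R e_k + L d_k for all k, and let μ : ℕ → ℝ with |d_ℓ|_∞ ≤ μ_ℓ for all ℓ. Then: (i) for every k with 0 ≤ k ≤ η−2, |C e_{k+1}|_∞ ≤ ‖C R^{k+1}‖ · |e_0|_∞ + Σ_{ℓ=0}^{k} ‖C R^ℓ L‖ μ_{k−ℓ}; and (ii) for every k ≥ η−1, |C e_{k+1}|_∞ ≤ Σ_{ℓ=0}^{η−1} ‖C R^ℓ L‖ μ_{k−ℓ}. -/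
lemma mulVec_sum' {m n : ℕ} (M : Matrix (Fin m) (Fin n) ℝ) {ι : Type*} (s : Finset ι)
    (f : ι → Fin n → ℝ) :
    M.mulVec (∑ i ∈ s, f i) = ∑ i ∈ s, M.mulVec (f i) := by
  ext j
  simp [Matrix.mulVec, dotProduct, Finset.mul_sum, Finset.sum_apply]
  rw [Finset.sum_comm]

lemma opNorm_mulVec_le {m n : ℕ} (M : Matrix (Fin m) (Fin n) ℝ) (v : Fin n → ℝ) :
    ‖M.mulVec v‖ ≤ opNorm M * ‖v‖ := by
  have h := (LinearMap.toContinuousLinearMap (Matrix.mulVecLin M)).le_opNorm v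
  simpa [opNorm, Matrix.mulVecLin_apply] using h

/-- Estimation-error bounds for a deadbeat Luenberger observer with
nilpotent error matrix `R` (`R^η = 0`): for `k ≥ η − 1` the bound on
`|C e_{k+1}|_∞` depends only on the last `η` quantization error bounds. -/
theorem deadbeat_observer_error_bounds
    {n p : ℕ}
    (R : Matrix (Fin n) (Fin n) ℝ) (L : Matrix (Fin n) (Fin p) ℝ)
    (C : Matrix (Fin p) (Fin n) ℝ)
    (η : ℕ) (hη : 1 ≤ η) (hnil : R ^ η = 0)
    (e : ℕ → Fin n → ℝ) (d : ℕ → Fin p → ℝ)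
    (hdyn : ∀ k : ℕ, e (k + 1) = R.mulVec (e k) + L.mulVec (d k))
    (μ : ℕ → ℝ) (hd : ∀ ℓ : ℕ, ‖d ℓ‖ ≤ μ ℓ) :
    (∀ k : ℕ, k + 2 ≤ η →
      ‖C.mulVec (e (k + 1))‖ ≤
        opNorm (C * R ^ (k + 1)) * ‖e 0‖
          + ∑ ℓ ∈ Finset.range (k + 1), opNorm (C * R ^ ℓ * L) * μ (k - ℓ)) ∧
    (∀ k : ℕ, η - 1 ≤ k →
      ‖C.mulVec (e (k + 1))‖ ≤
        ∑ ℓ ∈ Finset.range η, opNorm (C * R ^ ℓ * L) * μ (k - ℓ)) := by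
  -- closed-form expansion of the error
  have key : ∀ k : ℕ, e (k + 1) = (R ^ (k + 1)).mulVec (e 0)
      + ∑ ℓ ∈ Finset.range (k + 1), ((R ^ ℓ) * L).mulVec (d (k - ℓ)) := by
    intro k
    induction k with
    | zero => simp [hdyn 0]
    | succ k ih =>
        rw [hdyn (k + 1), ih, Matrix.mulVec_add, Matrix.mulVec_mulVec,
          mulVec_sum' _ _ _, ← pow_succ']
        rw [Finset.sum_range_succ' (fun ℓ => ((R ^ ℓ) * L).mulVec (d (k + 1 - ℓ)))]
        have hcongr : ∀ ℓ ∈ Finset.range (k + 1),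
            ((R ^ (ℓ + 1)) * L).mulVec (d (k + 1 - (ℓ + 1)))
              = R.mulVec (((R ^ ℓ) * L).mulVec (d (k - ℓ))) := by
          intro ℓ _
          rw [Matrix.mulVec_mulVec, pow_succ', Matrix.mul_assoc, Nat.succ_sub_succ]
        rw [Finset.sum_congr rfl hcongr]
        simp only [pow_zero, Matrix.one_mul]
        abel
  have hC : ∀ k : ℕ, C.mulVec (e (k + 1)) = (C * R ^ (k + 1)).mulVec (e 0)
      + ∑ ℓ ∈ Finset.range (k + 1), (C * R ^ ℓ * L).mulVec (d (k - ℓ)) := by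
    intro k
    rw [key k, Matrix.mulVec_add, Matrix.mulVec_mulVec, mulVec_sum' _ _ _]
    congr 1
    refine Finset.sum_congr rfl fun ℓ _ => ?_
    rw [Matrix.mulVec_mulVec, Matrix.mul_assoc]
  have hterm : ∀ k ℓ : ℕ, ‖(C * R ^ ℓ * L).mulVec (d (k - ℓ))‖ ≤
      opNorm (C * R ^ ℓ * L) * μ (k - ℓ) := by
    intro k ℓ
    calc ‖(C * R ^ ℓ * L).mulVec (d (k - ℓ))‖
        ≤ opNorm (C * R ^ ℓ * L) * ‖d (k - ℓ)‖ := opNorm_mulVec_le _ _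
      _ ≤ opNorm (C * R ^ ℓ * L) * μ (k - ℓ) := by
          apply mul_le_mul_of_nonneg_left (hd _)
          exact norm_nonneg _
  constructor
  · intro k _
    rw [hC k]
    calc ‖(C * R ^ (k + 1)).mulVec (e 0)
          + ∑ ℓ ∈ Finset.range (k + 1), (C * R ^ ℓ * L).mulVec (d (k - ℓ))‖
        ≤ ‖(C * R ^ (k + 1)).mulVec (e 0)‖
          + ‖∑ ℓ ∈ Finset.range (k + 1), (C * R ^ ℓ * L).mulVec (d (k - ℓ))‖ :=
          norm_add_le _ _
      _ ≤ opNorm (C * R ^ (k + 1)) * ‖e 0‖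
          + ∑ ℓ ∈ Finset.range (k + 1), opNorm (C * R ^ ℓ * L) * μ (k - ℓ) := by
          apply add_le_add (opNorm_mulVec_le _ _)
          exact (norm_sum_le _ _).trans (Finset.sum_le_sum fun ℓ _ => hterm k ℓ)
  · intro k hk
    have hkη : η ≤ k + 1 := by omega
    have hRk : R ^ (k + 1) = 0 := by
      have : R ^ (k + 1) = R ^ η * R ^ (k + 1 - η) := by
        rw [← pow_add]
        congr 1
        omega
      rw [this, hnil, zero_mul]
    have hzero : ∀ ℓ ∈ Finset.range (k + 1), ℓ ∉ Finset.range η →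
        (C * R ^ ℓ * L).mulVec (d (k - ℓ)) = 0 := by
      intro ℓ _ hℓ
      have hℓη : η ≤ ℓ := by simpa [Finset.mem_range, not_lt] using hℓ
      have : R ^ ℓ = 0 := by
        have : R ^ ℓ = R ^ η * R ^ (ℓ - η) := by
          rw [← pow_add]; congr 1; omega
        rw [this, hnil, zero_mul]
      simp [this]
    have h0 : (C * R ^ (k + 1)).mulVec (e 0) = 0 := by rw [hRk]; simp
    rw [hC k, h0, zero_add, ← Finset.sum_subset (Finset.range_subset_range.2 hkη) hzero]
    exact (norm_sum_le _ _).trans (Finset.sum_le_sum fun ℓ _ => hterm k ℓ)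
end

section
/- Let ρ ∈ (0,1), let c_0, c_1, c_2 ≥ 0 and E_st, N > 0, and define E : ℕ → ℝ with E_0 given and, for k ≥ 0, E_{k+1} := c_0 E_st ρ^{k+1} + c_1 Σ_{ℓ=0}^{k} ρ^ℓ μ_{k−ℓ} + c_2 Σ_{ℓ=0}^{k−1} Σ_{i=0}^{k−ℓ−1} ρ^{ℓ+i} μ_{k−ℓ−i−1}, where μ_j := E_j/N. Set β_0 := ρ + c_1/N and β_1 := c_2/N. Then: (i) Σ_{ℓ=0}^{k−1} Σ_{i=0}^{k−ℓ−1} ρ^{ℓ+i} μ_{k−ℓ−i−1} = Σ_{ℓ=0}^{k−1} Σ_{j=ℓ}^{k−1} ρ^{j} μ_{k−j−1} for all k ≥ 1; (ii) E_{k+1} = β_0 E_k + β_1 Σ_{ℓ=0}^{k−1} ρ^ℓ E_{k−ℓ−1} for all k ≥ 1; and (iii) E_{k+1} = (ρ + β_0) E_k + (β_1 − ρ β_0) E_{k−1} for all k ≥ 2. -/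
/-- Reduction of the error-bound sequence of Theorem 3 to a second-order
linear recursion, with `μ_j := E_j / N`. -/
theorem triple_convolution_to_second_order_recursion
    (ρ : ℝ) (hρ : ρ ∈ Set.Ioo (0:ℝ) 1)
    (c₀ c₁ c₂ : ℝ) (hc₀ : 0 ≤ c₀) (hc₁ : 0 ≤ c₁) (hc₂ : 0 ≤ c₂)
    (Est N : ℝ) (hEst : 0 < Est) (hN : 0 < N)
    (E : ℕ → ℝ)
    (hE : ∀ k : ℕ, E (k + 1) =
      c₀ * Est * ρ ^ (k + 1)
      + c₁ * ∑ ℓ ∈ Finset.range (k + 1), ρ ^ ℓ * (E (k - ℓ) / N)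
      + c₂ * ∑ ℓ ∈ Finset.range k, ∑ i ∈ Finset.range (k - ℓ),
          ρ ^ (ℓ + i) * (E (k - ℓ - i - 1) / N)) :
    (∀ k : ℕ, 1 ≤ k →
      ∑ ℓ ∈ Finset.range k, ∑ i ∈ Finset.range (k - ℓ),
          ρ ^ (ℓ + i) * (E (k - ℓ - i - 1) / N)
        = ∑ ℓ ∈ Finset.range k, ∑ j ∈ Finset.Ico ℓ k,
            ρ ^ j * (E (k - j - 1) / N)) ∧
    (∀ k : ℕ, 1 ≤ k →
      E (k + 1) = (ρ + c₁ / N) * E k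
        + (c₂ / N) * ∑ ℓ ∈ Finset.range k, ρ ^ ℓ * E (k - ℓ - 1)) ∧
    (∀ k : ℕ, 2 ≤ k →
      E (k + 1) = (ρ + (ρ + c₁ / N)) * E k
        + ((c₂ / N) - ρ * (ρ + c₁ / N)) * E (k - 1)) := by
  have hN' : N ≠ 0 := ne_of_gt hN
  -- Part (i), valid for all k
  have hswap : ∀ k : ℕ,
      ∑ ℓ ∈ Finset.range k, ∑ i ∈ Finset.range (k - ℓ),
          ρ ^ (ℓ + i) * (E (k - ℓ - i - 1) / N)
        = ∑ ℓ ∈ Finset.range k, ∑ j ∈ Finset.Ico ℓ k,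
            ρ ^ j * (E (k - j - 1) / N) := by
    intro k
    refine Finset.sum_congr rfl fun ℓ hℓ => ?_
    rw [Finset.sum_Ico_eq_sum_range]
    refine Finset.sum_congr rfl fun i hi => ?_
    have h : k - (ℓ + i) - 1 = k - ℓ - i - 1 := by omega
    rw [h]
  -- Part (ii)
  have hpart2 : ∀ k : ℕ, 1 ≤ k →
      E (k + 1) = (ρ + c₁ / N) * E k
        + (c₂ / N) * ∑ ℓ ∈ Finset.range k, ρ ^ ℓ * E (k - ℓ - 1) := by
    intro k hk
    obtain ⟨m, rfl⟩ : ∃ m, k = m + 1 := ⟨k - 1, by omega⟩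
    have h1 := hE (m + 1)
    have h0 := hE m
    rw [hswap (m + 1)] at h1
    rw [hswap m] at h0
    have hS1 : ∑ ℓ ∈ Finset.range (m + 1 + 1), ρ ^ ℓ * (E (m + 1 - ℓ) / N)
        = E (m + 1) / N + ρ * ∑ ℓ ∈ Finset.range (m + 1), ρ ^ ℓ * (E (m - ℓ) / N) := by
      rw [Finset.sum_range_succ', Finset.mul_sum]
      have h : ∀ i ∈ Finset.range (m + 1),
          ρ ^ (i + 1) * (E (m + 1 - (i + 1)) / N)
            = ρ * (ρ ^ i * (E (m - i) / N)) := by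
        intro i hi
        have h : m + 1 - (i + 1) = m - i := by omega
        rw [h, pow_succ]; ring
      rw [Finset.sum_congr rfl h, pow_zero, one_mul, Nat.sub_zero]
      ring
    have hS2 : ∑ ℓ ∈ Finset.range (m + 1), ∑ j ∈ Finset.Ico ℓ (m + 1),
          ρ ^ j * (E (m + 1 - j - 1) / N)
        = (∑ ℓ ∈ Finset.range (m + 1), ρ ^ ℓ * (E (m - ℓ) / N))
          + ρ * ∑ ℓ ∈ Finset.range m, ∑ j ∈ Finset.Ico ℓ m,
              ρ ^ j * (E (m - j - 1) / N) := by
      rw [Finset.sum_range_succ', Finset.mul_sum]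
      rw [add_comm]
      congr 1
      · rw [show Finset.Ico 0 (m + 1) = Finset.range (m + 1) by
          rw [Finset.range_eq_Ico]]
        refine Finset.sum_congr rfl fun j hj => ?_
        have h : m + 1 - j - 1 = m - j := by omega
        rw [h]
      · refine Finset.sum_congr rfl fun ℓ hℓ => ?_
        rw [Finset.sum_Ico_eq_sum_range, Finset.sum_Ico_eq_sum_range, Finset.mul_sum]
        have h : m + 1 - (ℓ + 1) = m - ℓ := by omega
        rw [h]
        refine Finset.sum_congr rfl fun i hi => ?_
        have h1 : m + 1 - (ℓ + 1 + i) - 1 = m - (ℓ + i) - 1 := by omega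
        rw [h1, show ℓ + 1 + i = (ℓ + i) + 1 by omega, pow_succ]
        ring
    rw [hS1, hS2] at h1
    have hT : (c₂ / N) * ∑ ℓ ∈ Finset.range (m + 1), ρ ^ ℓ * E (m + 1 - ℓ - 1)
        = c₂ * ∑ ℓ ∈ Finset.range (m + 1), ρ ^ ℓ * (E (m - ℓ) / N) := by
      rw [Finset.mul_sum, Finset.mul_sum]
      refine Finset.sum_congr rfl fun ℓ hℓ => ?_
      have h : m + 1 - ℓ - 1 = m - ℓ := by omega
      rw [h]
      field_simp
    linear_combination h1 - ρ * h0 - hT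
  refine ⟨fun k _ => hswap k, hpart2, ?_⟩
  -- Part (iii)
  intro k hk
  obtain ⟨m, rfl⟩ : ∃ m, k = m + 2 := ⟨k - 2, by omega⟩
  have e1 := hpart2 (m + 2) (by omega)
  have e2 := hpart2 (m + 1) (by omega)
  have e3 : ∑ ℓ ∈ Finset.range (m + 2), ρ ^ ℓ * E (m + 2 - ℓ - 1)
      = E (m + 1) + ρ * ∑ ℓ ∈ Finset.range (m + 1), ρ ^ ℓ * E (m + 1 - ℓ - 1) := by
    rw [Finset.sum_range_succ', Finset.mul_sum]
    have h : ∀ i ∈ Finset.range (m + 1),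
        ρ ^ (i + 1) * E (m + 2 - (i + 1) - 1)
          = ρ * (ρ ^ i * E (m + 1 - i - 1)) := by
      intro i hi
      have h : m + 2 - (i + 1) - 1 = m + 1 - i - 1 := by omega
      rw [h, pow_succ]; ring
    rw [Finset.sum_congr rfl h, pow_zero, one_mul]
    have h0 : m + 2 - 0 - 1 = m + 1 := by omega
    rw [h0]
    ring
  have hk1 : m + 2 - 1 = m + 1 := by omega
  rw [hk1]
  linear_combination e1 + (c₂ / N) * e3 - ρ * e2
end
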